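/- If X ⊆ 2^ω contains a perfect subset, then for every uniformity 𝕌 compatible with the topology of the Isbell–Mrówka space Ψ(𝒜_X) of the branching family 𝒜_X, Player II has a winning strategy in the proximal game on (Ψ(𝒜_X), 𝕌); in particular Ψ(𝒜_X) is not semi-proximal. -/

import Mathlib

/-- An almost disjoint family on `N`: infinite sets with pairwise finite intersections. -/
def IsAlmostDisjointFamily {N : Type} (A : Set (Set N)) : Prop :=
  (∀ a ∈ A, a.Infinite) ∧ ∀ a ∈ A, ∀ b ∈ A, a ≠ b → (a ∩ b).Finite

/-- Carrier of the Isbell–Mrówka space of `A`. -/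
def Psi (N : Type) (A : Set (Set N)) : Type := N ⊕ ↥A

/-- Basic open sets of the Isbell–Mrówka space: singletons of isolated points of `N`,
and sets of the form `{a} ∪ (a \ F)` for `a ∈ A` and finite `F ⊆ N`. -/
def psiBasic (N : Type) (A : Set (Set N)) : Set (Set (Psi N A)) :=
  {s | ∃ n : N, s = {(Sum.inl n : Psi N A)}} ∪
  {s | ∃ (a : ↥A) (F : Finset N),
      s = insert (Sum.inr a) ((Sum.inl : N → Psi N A) '' ((a : Set N) \ ↑F))}

/-- The Isbell–Mrówka topology. -/
def psiTopology (N : Type) (A : Set (Set N)) : TopologicalSpace (Psi N A) :=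
  TopologicalSpace.generateFrom (psiBasic N A)

/-- Player II's responses along a run `U` of entourages, following strategy `σ`:
the `n`-th point is `σ (U 0, …, U n)`. -/
def respondsTo {X : Type*} (σ : List (Set (X × X)) → X)
    (U : ℕ → Set (X × X)) (n : ℕ) : X :=
  σ ((List.range (n + 1)).map U)

/-- `σ` is a winning strategy for Player II in the proximal game on the uniform space `X`:
against every decreasing sequence of entourages played by Player I, the responses of `σ`
are legal (`x_{n+1} ∈ U_n[x_n]`), do not converge, and `⋂ₙ U_n[x_n] ≠ ∅`. -/
def IsWinningStrategyForII {X : Type*} [UniformSpace X]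
    (σ : List (Set (X × X)) → X) : Prop :=
  ∀ U : ℕ → Set (X × X), (∀ n, U n ∈ uniformity X) → (∀ n, U (n + 1) ⊆ U n) →
    (∀ n, respondsTo σ U (n + 1) ∈ UniformSpace.ball (respondsTo σ U n) (U n)) ∧
    (¬ ∃ l : X, Filter.Tendsto (respondsTo σ U) Filter.atTop (nhds l)) ∧
    (⋂ n, UniformSpace.ball (respondsTo σ U n) (U n)).Nonempty

/-- The branch through `x ∈ 2^ω`: the set of its finite initial segments in `2^{<ω}`. -/
def branchOf (x : ℕ → Bool) : Set (List Bool) :=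
  {l | ∃ n : ℕ, l = (List.range n).map x}

/-- The branching almost disjoint family `𝒜_X` on `2^{<ω}`. -/
def branchFam (X : Set (ℕ → Bool)) : Set (Set (List Bool)) :=
  {a | ∃ x ∈ X, a = branchOf x}

/-!
Player II fixes an uncountable closed `C ⊆ X` (a perfect set is uncountable by the Baire category
theorem) and always answers with the point `aₓ` of a branch `x ∈ C`. Since `x↾k → aₓ` in
`Ψ(𝒜_X)`, two pigeonhole arguments shrink the uncountable set of candidate branches to an
uncountable set of branches through a common, longer stem `sₙ` whose points are all `Vₙ`-close to
`sₙ`, where `Vₙ` is a fourth root of `Uₙ`; she answers `Uₙ` with such a branch `xₙ ≠ xₙ₋₁`.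
A sequence of points of `𝒜_X` converges in `Ψ(𝒜_X)` only if it is eventually constant, so the
play diverges. The stems converge to a branch `x∞ ∈ C`, and the chain
`xₙ → sₙ ← xⱼ → sⱼ ← x∞` (for large `j`) puts `aₓ∞` in every `Uₙ[xₙ]`.
-/

open Set Filter Topology Uniformity Function

theorem exists_not_countable_sep {α ι : Type*} [Countable ι] {A : Set α} (hA : ¬ A.Countable)
    {P : ι → α → Prop} (hP : ∀ y ∈ A, ∃ i, P i y) : ∃ i, ¬ {y ∈ A | P i y}.Countable := by
  by_contra! h
  refine hA ((countable_iUnion h).mono fun y hy => ?_)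
  obtain ⟨i, hi⟩ := hP y hy
  exact mem_iUnion.2 ⟨i, hy, hi⟩

theorem Set.nonempty_of_not_countable {α : Type*} {A : Set α} (hA : ¬ A.Countable) :
    A.Nonempty :=
  nonempty_iff_ne_empty.2 fun h => hA (h ▸ countable_empty)

/-- The Baire category theorem in the compact Hausdorff space `C`: a countable space is the
union of its points, so one of them must be isolated. -/
theorem IsClosed.not_countable_of_forall_mem_closure_diff {α : Type*} [TopologicalSpace α]
    [CompactSpace α] [T2Space α] {C : Set α} (hC : IsClosed C) (hne : C.Nonempty)
    (hacc : ∀ x ∈ C, x ∈ closure (C \ {x})) : ¬ C.Countable := by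
  intro hcount
  have : CompactSpace C := isCompact_iff_compactSpace.mp hC.isCompact
  have : Countable C := hcount.to_subtype
  have : Nonempty C := hne.to_subtype
  have hdense (z : C) : Dense ({z}ᶜ : Set C) := by
    refine Subtype.dense_iff.2 fun x hx => ?_
    have himage : Subtype.val '' ({z}ᶜ : Set C) = C \ {(z : α)} := by
      ext w
      simp [and_comm]
    rw [himage]
    by_cases hxz : x = z
    · exact hxz ▸ hacc z z.2
    · exact subset_closure ⟨hx, hxz⟩
  obtain ⟨w, hw⟩ := (dense_iInter_of_isOpen (fun z : C => isOpen_compl_singleton) hdense).nonempty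
  exact mem_iInter.1 hw w rfl

section InitSeg

variable {α : Type*}

def initSeg (y : ℕ → α) (n : ℕ) : List α := (List.range n).map y

@[simp]
theorem length_initSeg (y : ℕ → α) (n : ℕ) : (initSeg y n).length = n := by
  simp [initSeg]

theorem initSeg_eq_initSeg_iff {y z : ℕ → α} {n : ℕ} :
    initSeg y n = initSeg z n ↔ ∀ i < n, y i = z i := by
  simp [initSeg, List.map_inj_left]

theorem initSeg_injective (y : ℕ → α) : Injective (initSeg y) := fun m n h => by
  simpa using congrArg List.length h

/-- The limit `x` is the diagonal `x i = c i i`. -/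
theorem exists_tendsto_of_initSeg_eq [TopologicalSpace α] {c : ℕ → ℕ → α} {L : ℕ → ℕ}
    (hL : ∀ n, n < L n) (hc : ∀ m n, m ≤ n → initSeg (c n) (L m) = initSeg (c m) (L m)) :
    ∃ x, Tendsto c atTop (𝓝 x) ∧ ∀ m, initSeg x (L m) = initSeg (c m) (L m) := by
  have hc' : ∀ m n, m ≤ n → ∀ i < L m, c n i = c m i := fun m n hmn =>
    initSeg_eq_initSeg_iff.1 (hc m n hmn)
  refine ⟨fun i => c i i, tendsto_pi_nhds.2 fun i => ?_, fun m => ?_⟩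
  · exact tendsto_const_nhds.congr'
      (eventually_atTop.2 ⟨i, fun n hn => (hc' i n hn i (hL i)).symm⟩)
  · refine initSeg_eq_initSeg_iff.2 fun i hi => ?_
    calc c i i = c (max i m) i := (hc' i _ (le_max_left i m) i (hL i)).symm
      _ = c m i := hc' m _ (le_max_right i m) i hi

end InitSeg

section Psi

variable {N : Type} {A : Set (Set N)}

theorem Psi.eq_of_inr_mem_insert {a b : A} {S : Set N}
    (h : (Sum.inr a : Psi N A) ∈ insert (Sum.inr b) (Sum.inl '' S)) : a = b := by
  rcases h with h | ⟨_, _, h⟩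
  · exact Sum.inr_injective h
  · exact absurd h Sum.inl_ne_inr

theorem Psi.tendsto_inl {a : A} {t : ℕ → N} (ht : Injective t) (hta : ∀ n, t n ∈ (a : Set N)) :
    Tendsto (fun n => (Sum.inl (t n) : Psi N A)) atTop
      (@nhds (Psi N A) (psiTopology N A) (Sum.inr a)) := by
  refine TopologicalSpace.tendsto_nhds_generateFrom_iff.2 fun s hs has => ?_
  rcases hs with ⟨n, rfl⟩ | ⟨b, F, rfl⟩
  · exact absurd has Sum.inr_ne_inl
  obtain rfl := Psi.eq_of_inr_mem_insert has
  have hF : ∀ᶠ n in atTop, t n ∉ F := by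
    rw [← Nat.cofinite_eq_atTop]
    exact ht.tendsto_cofinite F.finite_toSet.compl_mem_cofinite
  exact hF.mono fun n hn => Or.inr ⟨t n, ⟨hta n, hn⟩, rfl⟩

/-- Each point of `Ψ(A)` has a neighbourhood containing no other point of `A`. -/
theorem Psi.eventually_eq_of_tendsto_inr {s : ℕ → A} {l : Psi N A}
    (h : Tendsto (fun n => (Sum.inr (s n) : Psi N A)) atTop
      (@nhds (Psi N A) (psiTopology N A) l)) :
    ∀ᶠ n in atTop, (Sum.inr (s n) : Psi N A) = l := by
  rcases l with x | b
  · have hopen : IsOpen[psiTopology N A] {Sum.inl x} :=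
      TopologicalSpace.isOpen_generateFrom_of_mem (Or.inl ⟨x, rfl⟩)
    exact h (@IsOpen.mem_nhds _ (psiTopology N A) _ _ hopen rfl)
  · have hopen : IsOpen[psiTopology N A]
        (insert (Sum.inr b) (Sum.inl '' ((b : Set N) \ ↑(∅ : Finset N)))) :=
      TopologicalSpace.isOpen_generateFrom_of_mem (Or.inr ⟨b, ∅, rfl⟩)
    filter_upwards [h (@IsOpen.mem_nhds _ (psiTopology N A) _ _ hopen (mem_insert _ _))]
      with n hn
    exact congrArg Sum.inr (Psi.eq_of_inr_mem_insert hn)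

end Psi

section Uniform

variable {Ω : Type*}

def IsZigzagRoot (V U : Set (Ω × Ω)) : Prop :=
  ∀ ⦃a b c d e : Ω⦄, (a, b) ∈ V → (c, b) ∈ V → (c, d) ∈ V → (e, d) ∈ V → (a, e) ∈ U

theorem IsZigzagRoot.mono {V V' U : Set (Ω × Ω)} (h : IsZigzagRoot V U) (hV' : V' ⊆ V) :
    IsZigzagRoot V' U := fun _ _ _ _ _ hab hcb hcd hed => h (hV' hab) (hV' hcb) (hV' hcd) (hV' hed)

variable [UniformSpace Ω]

theorem exists_isZigzagRoot {U : Set (Ω × Ω)} (hU : U ∈ 𝓤 Ω) : ∃ V ∈ 𝓤 Ω, IsZigzagRoot V U := by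
  obtain ⟨W, hW, -, hWU⟩ := comp_symm_mem_uniformity_sets hU
  obtain ⟨V, hV, hVsymm, hVW⟩ := comp_symm_mem_uniformity_sets hW
  refine ⟨V, hV, fun a b c d e hab hcb hcd hed => hWU ⟨c, hVW ⟨b, hab, ?_⟩, hVW ⟨d, hcd, ?_⟩⟩⟩
  · exact SetRel.symm V hcb
  · exact SetRel.symm V hed

end Uniform

structure Stage (β Ω : Type*) where
  entourage : Set (Ω × Ω)
  stem : List β
  candidates : Set (ℕ → β)
  branch : ℕ → β

noncomputable section Strategy

variable {β Ω : Type*} (e : (ℕ → β) → Ω) (f : List β → Ω)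

def approxCylinder (W : Set (Ω × Ω)) (A : Set (ℕ → β)) (s : List β) : Set (ℕ → β) :=
  {y ∈ A | initSeg y s.length = s ∧ (e y, f s) ∈ W}

theorem approxCylinder_mono {W : Set (Ω × Ω)} {A B : Set (ℕ → β)} (hAB : A ⊆ B) (s : List β) :
    approxCylinder e f W A s ⊆ approxCylinder e f W B s :=
  fun _ ⟨hy, hys⟩ => ⟨hAB hy, hys⟩

variable [UniformSpace Ω]

/-- Two pigeonholes: first on the index from which `(e y, f (y↾n)) ∈ W`, then on the stem. -/
theorem exists_not_countable_approxCylinder [Countable β] {W : Set (Ω × Ω)} (hW : W ∈ 𝓤 Ω)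
    {A : Set (ℕ → β)} (hA : ¬ A.Countable)
    (hlim : ∀ y ∈ A, Tendsto (fun n => f (initSeg y n)) atTop (𝓝 (e y))) (m : ℕ) :
    ∃ s : List β, m < s.length ∧ ¬ (approxCylinder e f W A s).Countable := by
  have hev (y) (hy : y ∈ A) : ∃ k, ∀ n ≥ k, (e y, f (initSeg y n)) ∈ W :=
    eventually_atTop.1 ((hlim y hy).eventually (mem_nhds_left (e y) hW))
  obtain ⟨k, hk⟩ := exists_not_countable_sep hA hev
  obtain ⟨s, hs⟩ := exists_not_countable_sep hk (P := fun s y => initSeg y (max k (m + 1)) = s)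
    fun y _ => ⟨_, rfl⟩
  obtain ⟨y, -, hys⟩ := Set.nonempty_of_not_countable hs
  have hlen : s.length = max k (m + 1) := hys ▸ length_initSeg _ _
  refine ⟨s, by omega, mt (Countable.mono ?_) hs⟩
  rintro y ⟨⟨hyA, hyk⟩, rfl⟩
  exact ⟨hyA, by rw [length_initSeg], hyk _ (le_max_left _ _)⟩

variable [Nonempty β]

namespace Stage

def initial (C : Set (ℕ → β)) : Stage β Ω :=
  ⟨univ, [], C, Classical.epsilon (· ∈ C)⟩

def nextEntourage (st : Stage β Ω) (U : Set (Ω × Ω)) : Set (Ω × Ω) :=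
  st.entourage ∩ Classical.epsilon fun V => V ∈ 𝓤 Ω ∧ IsZigzagRoot V U

def nextStem (st : Stage β Ω) (U : Set (Ω × Ω)) : List β :=
  Classical.epsilon fun s => st.stem.length < s.length ∧
    ¬ (approxCylinder e f (st.nextEntourage U) (st.candidates \ {st.branch}) s).Countable

def next (st : Stage β Ω) (U : Set (Ω × Ω)) : Stage β Ω :=
  let candidates :=
    approxCylinder e f (st.nextEntourage U) (st.candidates \ {st.branch}) (st.nextStem e f U)
  ⟨st.nextEntourage U, st.nextStem e f U, candidates, Classical.epsilon (· ∈ candidates)⟩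

def run (C : Set (ℕ → β)) (L : List (Set (Ω × Ω))) : Stage β Ω :=
  L.foldl (next e f) (initial C)

structure IsValid (C : Set (ℕ → β)) (st : Stage β Ω) : Prop where
  entourage_mem : st.entourage ∈ 𝓤 Ω
  not_countable : ¬ st.candidates.Countable
  branch_mem : st.branch ∈ st.candidates
  candidates_subset : st.candidates ⊆ approxCylinder e f st.entourage C st.stem

variable {e f} {C : Set (ℕ → β)} {st : Stage β Ω} {U : Set (Ω × Ω)}

theorem isValid_initial (hC : ¬ C.Countable) : (initial C).IsValid e f C where
  entourage_mem := univ_mem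
  not_countable := hC
  branch_mem := Classical.epsilon_spec (Set.nonempty_of_not_countable hC)
  candidates_subset _ hy := ⟨hy, rfl, trivial⟩

theorem next_entourage_subset : (st.next e f U).entourage ⊆ st.entourage := inter_subset_left

theorem next_candidates_subset : (st.next e f U).candidates ⊆ st.candidates \ {st.branch} :=
  fun _ hy => hy.1

theorem isZigzagRoot_next_entourage (hU : U ∈ 𝓤 Ω) : IsZigzagRoot (st.next e f U).entourage U :=
  (Classical.epsilon_spec (exists_isZigzagRoot hU)).2.mono inter_subset_right

theorem IsValid.nextStem_spec [Countable β] (h : st.IsValid e f C) (hU : U ∈ 𝓤 Ω)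
    (hlim : ∀ y ∈ C, Tendsto (fun n => f (initSeg y n)) atTop (𝓝 (e y))) :
    st.stem.length < (st.nextStem e f U).length ∧
      ¬ (approxCylinder e f (st.nextEntourage U) (st.candidates \ {st.branch})
        (st.nextStem e f U)).Countable :=
  Classical.epsilon_spec <| exists_not_countable_approxCylinder e f
    (inter_mem h.entourage_mem (Classical.epsilon_spec (exists_isZigzagRoot hU)).1)
    (fun hc => h.not_countable (hc.of_sdiff (countable_singleton _)))
    (fun y hy => hlim y (h.candidates_subset hy.1).1) _

theorem IsValid.next [Countable β] (h : st.IsValid e f C) (hU : U ∈ 𝓤 Ω)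
    (hlim : ∀ y ∈ C, Tendsto (fun n => f (initSeg y n)) atTop (𝓝 (e y))) :
    (st.next e f U).IsValid e f C where
  entourage_mem := inter_mem h.entourage_mem (Classical.epsilon_spec (exists_isZigzagRoot hU)).1
  not_countable := (h.nextStem_spec hU hlim).2
  branch_mem := Classical.epsilon_spec (Set.nonempty_of_not_countable (h.nextStem_spec hU hlim).2)
  candidates_subset := approxCylinder_mono e f (fun _ hy => (h.candidates_subset hy.1).1) _

end Stage

def cantorStrategy (C : Set (ℕ → β)) (L : List (Set (Ω × Ω))) : Ω :=
  e (Stage.run e f C L).branch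

def stageSeq (C : Set (ℕ → β)) (U : ℕ → Set (Ω × Ω)) (n : ℕ) : Stage β Ω :=
  Stage.run e f C ((List.range (n + 1)).map U)

variable {e f} {C : Set (ℕ → β)} {U : ℕ → Set (Ω × Ω)}

theorem stageSeq_zero : stageSeq e f C U 0 = (Stage.initial C).next e f (U 0) := rfl

theorem stageSeq_succ (n : ℕ) :
    stageSeq e f C U (n + 1) = (stageSeq e f C U n).next e f (U (n + 1)) := by
  simp [stageSeq, Stage.run, List.range_succ, List.foldl_append]

theorem stageSeq_entourage_antitone : Antitone fun n => (stageSeq e f C U n).entourage :=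
  antitone_nat_of_succ_le fun n => stageSeq_succ (C := C) (U := U) n ▸ Stage.next_entourage_subset

theorem stageSeq_candidates_antitone : Antitone fun n => (stageSeq e f C U n).candidates :=
  antitone_nat_of_succ_le fun n =>
    stageSeq_succ (C := C) (U := U) n ▸ Stage.next_candidates_subset.trans sdiff_subset

theorem isZigzagRoot_stageSeq_entourage (hU : ∀ n, U n ∈ 𝓤 Ω) (n : ℕ) :
    IsZigzagRoot (stageSeq e f C U n).entourage (U n) := by
  cases n with
  | zero => rw [stageSeq_zero]; exact Stage.isZigzagRoot_next_entourage (hU 0)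
  | succ n => rw [stageSeq_succ]; exact Stage.isZigzagRoot_next_entourage (hU (n + 1))

/-- The four-step chain `e cₘ → f sₘ ← e cⱼ → f sⱼ ← e y`. -/
theorem stageSeq_branch_close (hv : ∀ n, (stageSeq e f C U n).IsValid e f C)
    (hU : ∀ n, U n ∈ 𝓤 Ω) {m j : ℕ} (hmj : m ≤ j) {y : ℕ → β}
    (hy : (e y, f (stageSeq e f C U j).stem) ∈ (stageSeq e f C U m).entourage) :
    (e (stageSeq e f C U m).branch, e y) ∈ U m := by
  have hj : (stageSeq e f C U j).branch ∈ (stageSeq e f C U m).candidates :=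
    stageSeq_candidates_antitone hmj (hv j).branch_mem
  exact isZigzagRoot_stageSeq_entourage hU m
    ((hv m).candidates_subset (hv m).branch_mem).2.2 ((hv m).candidates_subset hj).2.2
    (stageSeq_entourage_antitone hmj ((hv j).candidates_subset (hv j).branch_mem).2.2) hy

theorem exists_tendsto_stageSeq_branch [TopologicalSpace β]
    (hv : ∀ n, (stageSeq e f C U n).IsValid e f C)
    (hlen : ∀ n, n < (stageSeq e f C U n).stem.length) :
    ∃ x, Tendsto (fun n => (stageSeq e f C U n).branch) atTop (𝓝 x) ∧
      ∀ m, initSeg x (stageSeq e f C U m).stem.length = (stageSeq e f C U m).stem := by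
  have hstem {m n : ℕ} (hmn : m ≤ n) : initSeg (stageSeq e f C U n).branch
      (stageSeq e f C U m).stem.length = (stageSeq e f C U m).stem :=
    ((hv m).candidates_subset (stageSeq_candidates_antitone hmn (hv n).branch_mem)).2.1
  obtain ⟨x, hx, hxc⟩ := exists_tendsto_of_initSeg_eq hlen fun m n hmn =>
    (hstem hmn).trans (hstem le_rfl).symm
  exact ⟨x, hx, fun m => (hxc m).trans (hstem le_rfl)⟩

variable [Countable β]

theorem isValid_stageSeq (hC : ¬ C.Countable)
    (hlim : ∀ y ∈ C, Tendsto (fun n => f (initSeg y n)) atTop (𝓝 (e y)))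
    (hU : ∀ n, U n ∈ 𝓤 Ω) : ∀ n, (stageSeq e f C U n).IsValid e f C
  | 0 => (Stage.isValid_initial hC).next (hU 0) hlim
  | n + 1 => by
    rw [stageSeq_succ]
    exact (isValid_stageSeq hC hlim hU n).next (hU (n + 1)) hlim

theorem lt_length_stageSeq_stem (hC : ¬ C.Countable)
    (hlim : ∀ y ∈ C, Tendsto (fun n => f (initSeg y n)) atTop (𝓝 (e y)))
    (hU : ∀ n, U n ∈ 𝓤 Ω) : ∀ n, n < (stageSeq e f C U n).stem.length
  | 0 => ((Stage.isValid_initial hC).nextStem_spec (hU 0) hlim).1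
  | n + 1 => by
    have hn := lt_length_stageSeq_stem hC hlim hU n
    have hnext := ((isValid_stageSeq hC hlim hU n).nextStem_spec (hU (n + 1)) hlim).1
    rw [stageSeq_succ]
    exact lt_of_le_of_lt hn hnext

theorem exists_strategy_of_tendsto_initSeg [TopologicalSpace β] (hCc : IsClosed C)
    (hC : ¬ C.Countable) (hlim : ∀ y ∈ C, Tendsto (fun n => f (initSeg y n)) atTop (𝓝 (e y))) :
    ∃ σ : List (Set (Ω × Ω)) → Ω, ∀ U : ℕ → Set (Ω × Ω), (∀ n, U n ∈ 𝓤 Ω) →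
      ∃ c : ℕ → ℕ → β, (∀ n, c n ∈ C) ∧ (∀ n, c (n + 1) ≠ c n) ∧
        (∀ n, respondsTo σ U n = e (c n)) ∧
        (∀ n, respondsTo σ U (n + 1) ∈ UniformSpace.ball (respondsTo σ U n) (U n)) ∧
        (⋂ n, UniformSpace.ball (respondsTo σ U n) (U n)).Nonempty := by
  refine ⟨cantorStrategy e f C, fun U hU => ?_⟩
  set S := stageSeq e f C U
  have hv := isValid_stageSeq hC hlim hU
  have hlen := lt_length_stageSeq_stem hC hlim hU
  have hmemC (n : ℕ) : (S n).branch ∈ C := ((hv n).candidates_subset (hv n).branch_mem).1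
  obtain ⟨x, hx, hxS⟩ := exists_tendsto_stageSeq_branch hv hlen
  have hxC : x ∈ C := hCc.mem_of_tendsto hx (Eventually.of_forall hmemC)
  refine ⟨fun n => (S n).branch, hmemC, fun n => ?_, fun n => rfl, fun n => ?_,
    ⟨e x, mem_iInter.2 fun m => ?_⟩⟩
  · have hnext : (S (n + 1)).branch ∈ ((S n).next e f (U (n + 1))).candidates := by
      rw [← stageSeq_succ]
      exact (hv (n + 1)).branch_mem
    exact (Stage.next_candidates_subset hnext).2
  · exact stageSeq_branch_close hv hU n.le_succ (stageSeq_entourage_antitone n.le_succ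
      ((hv (n + 1)).candidates_subset (hv (n + 1)).branch_mem).2.2)
  · obtain ⟨k, hk⟩ := eventually_atTop.1
      ((hlim x hxC).eventually (mem_nhds_left (e x) (hv m).entourage_mem))
    have hj : k ≤ (S (max m k)).stem.length := (le_max_right m k).trans (hlen _).le
    exact stageSeq_branch_close hv hU (le_max_left m k) (hxS (max m k) ▸ hk _ hj)

end Strategy

section BranchingFamily

variable {X : Set (ℕ → Bool)}

theorem initSeg_mem_branchOf (y : ℕ → Bool) (n : ℕ) : initSeg y n ∈ branchOf y := ⟨n, rfl⟩

theorem branchOf_injective : Injective branchOf := by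
  intro y z h
  funext i
  obtain ⟨n, hn⟩ : initSeg y (i + 1) ∈ branchOf z := h ▸ initSeg_mem_branchOf y (i + 1)
  have hlen : i + 1 = n := by simpa using congrArg List.length hn
  subst hlen
  exact initSeg_eq_initSeg_iff.1 hn i i.lt_succ_self

open scoped Classical in
/-- `aₓ`, with a junk value for `x ∉ X`. -/
noncomputable def branchPoint (X : Set (ℕ → Bool)) (x : ℕ → Bool) :
    Psi (List Bool) (branchFam X) :=
  if h : x ∈ X then Sum.inr ⟨branchOf x, x, h, rfl⟩ else Sum.inl []

theorem branchPoint_of_mem {x : ℕ → Bool} (hx : x ∈ X) :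
    branchPoint X x = Sum.inr ⟨branchOf x, x, hx, rfl⟩ :=
  dif_pos hx

theorem tendsto_branchPoint {x : ℕ → Bool} (hx : x ∈ X) :
    Tendsto (fun n => (Sum.inl (initSeg x n) : Psi (List Bool) (branchFam X))) atTop
      (@nhds _ (psiTopology _ _) (branchPoint X x)) := by
  rw [branchPoint_of_mem hx]
  exact Psi.tendsto_inl (initSeg_injective x) (initSeg_mem_branchOf x)

end BranchingFamily

theorem perfect_subset_implies_II_wins_on_branching_family (X : Set (ℕ → Bool))
    (hperf : ∃ C : Set (ℕ → Bool), C ⊆ X ∧ C.Nonempty ∧ IsClosed C ∧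
      ∀ x ∈ C, x ∈ closure (C \ {x})) :
    ∀ u : UniformSpace (Psi (List Bool) (branchFam X)),
      u.toTopologicalSpace = psiTopology (List Bool) (branchFam X) →
      ∃ σ : List (Set (Psi (List Bool) (branchFam X) × Psi (List Bool) (branchFam X))) →
          Psi (List Bool) (branchFam X), @IsWinningStrategyForII _ u σ := by
  obtain ⟨C, hCX, hCne, hCc, hacc⟩ := hperf
  intro u hu
  let _ := u
  have hlim (x) (hx : x ∈ C) : Tendsto (Sum.inl ∘ initSeg x : ℕ → Psi (List Bool) (branchFam X))
      atTop (𝓝 (branchPoint X x)) := hu ▸ tendsto_branchPoint (hCX hx)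
  obtain ⟨σ, hσ⟩ := exists_strategy_of_tendsto_initSeg hCc
    (hCc.not_countable_of_forall_mem_closure_diff hCne hacc) hlim
  refine ⟨σ, fun U hU _ => ?_⟩
  obtain ⟨c, hcC, hcne, hresp, hlegal, hinter⟩ := hσ U hU
  refine ⟨hlegal, ?_, hinter⟩
  rintro ⟨l, hl⟩
  have hinr : Tendsto (fun n => (Sum.inr ⟨branchOf (c n), c n, hCX (hcC n), rfl⟩ :
      Psi (List Bool) (branchFam X)))
      atTop (@nhds _ (psiTopology (List Bool) (branchFam X)) l) := by
    rw [← hu, ← funext fun n => (hresp n).trans (branchPoint_of_mem (hCX (hcC n)))]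
    exact hl
  obtain ⟨N, hN⟩ := (Psi.eventually_eq_of_tendsto_inr hinr).exists_forall_of_atTop
  exact hcne N <| branchOf_injective <| congrArg Subtype.val <|
    Sum.inr_injective ((hN (N + 1) N.le_succ).trans (hN N le_rfl).symm)
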